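/- arXiv:1507.06757 — 2 statements merged into one kernel-verified Lean document; each statement's English description precedes it below -/
import Mathlib

section
/- For any commutative ring R and indeterminate T, the (left) global dimension of R[T] is at most the global dimension of R plus 1. -/
/-!
For an `R[X]`-module `M`, the characteristic sequence
`0 → R[X] ⊗[R] M → R[X] ⊗[R] M → M → 0`, whose first map is `X ⊗ 1 - 1 ⊗ X` and whose
second is the action map, is exact. Its two left-hand terms are base changes of `M` along the free
extension `R → R[X]`, so they have projective dimension at most `d` over `R[X]`; hence `M` has
projective dimension at most `d + 1`.
-/

/-- `projDimLE R n M` says the `R`-module `M` has projective dimension at most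
`n`: for `n = 0` it means `M` is projective, and for `n+1` it means `M` is a
quotient of a projective module whose kernel has projective dimension `≤ n`. -/
def projDimLE (R : Type) [CommRing R] :
    ℕ → (M : Type) → [AddCommGroup M] → [Module R M] → Prop
  | 0, M, _, _ => Module.Projective R M
  | n + 1, M, _, _ => ∃ (P : Type) (_ : AddCommGroup P) (_ : Module R P),
      Module.Projective R P ∧ ∃ f : P →ₗ[R] M, Function.Surjective f ∧
        projDimLE R n (LinearMap.ker f)

/-- The global dimension of `R` is at most `n` if every `R`-module has
projective dimension at most `n`. -/
def globalDimLE (R : Type) [CommRing R] (n : ℕ) : Prop :=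
  ∀ (M : Type) [AddCommGroup M] [Module R M], projDimLE R n M

open CategoryTheory TensorProduct Polynomial

section projDimLE

variable {R : Type} [CommRing R]

theorem projDimLE_iff_hasProjectiveDimensionLE {n : ℕ} {M : Type} [AddCommGroup M]
    [Module R M] : projDimLE R n M ↔ HasProjectiveDimensionLE (ModuleCat.of R M) n := by
  induction n generalizing M with
  | zero =>
    exact (IsProjective.iff_projective M).trans (projective_iff_hasProjectiveDimensionLE_zero _)
  | succ n ih =>
    constructor
    · rintro ⟨P, _, _, hP, f, hf, hK⟩
      have : HasProjectiveDimensionLT (ModuleCat.of R P) (n + 2) :=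
        hasProjectiveDimensionLT_of_ge _ 1 _ (by omega)
      exact (LinearMap.shortExact_shortComplexKer hf).hasProjectiveDimensionLT_X₃ (n + 1)
        (ih.mp hK) this
    · intro h
      have hf := Finsupp.linearCombination_id_surjective R M
      refine ⟨M →₀ R, _, _, inferInstance, _, hf, ih.mpr ?_⟩
      have : HasProjectiveDimensionLT (ModuleCat.of R (M →₀ R)) (n + 1) :=
        hasProjectiveDimensionLT_of_ge _ 1 _ (by omega)
      exact (LinearMap.shortExact_shortComplexKer hf).hasProjectiveDimensionLT_X₁ (n + 1) this h

variable {A B C : Type} [AddCommGroup A] [Module R A] [AddCommGroup B] [Module R B]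
  [AddCommGroup C] [Module R C]

theorem projDimLE.mono {m n : ℕ} (h : projDimLE R m A) (hmn : m ≤ n) : projDimLE R n A := by
  rw [projDimLE_iff_hasProjectiveDimensionLE] at h ⊢
  exact hasProjectiveDimensionLT_of_ge _ (m + 1) _ (by omega)

theorem projDimLE_succ_of_exact {n : ℕ} {f : A →ₗ[R] B} {g : B →ₗ[R] C}
    (hf : Function.Injective f) (hg : Function.Surjective g) (hfg : Function.Exact f g)
    (hA : projDimLE R n A) (hB : projDimLE R (n + 1) B) : projDimLE R (n + 1) C := by
  rw [projDimLE_iff_hasProjectiveDimensionLE] at hA hB ⊢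
  exact (ModuleCat.shortComplex_shortExact (.moduleCatMk f g hfg.linearMap_comp_eq_zero)
    hfg hf hg).hasProjectiveDimensionLT_X₃ (n + 1) hA hB

theorem projDimLE.baseChange (S : Type) [CommRing S] [Algebra R S] [Module.Flat R S] {n : ℕ}
    (h : projDimLE R n A) : projDimLE S n (S ⊗[R] A) := by
  induction n generalizing A with
  | zero =>
    have : Module.Projective R A := h
    exact (inferInstance : Module.Projective S (S ⊗[R] A))
  | succ n ih =>
    obtain ⟨P, _, _, hP, f, hf, hK⟩ := h
    have hSP : projDimLE S 0 (S ⊗[R] P) := (inferInstance : Module.Projective S (S ⊗[R] P))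
    exact projDimLE_succ_of_exact (f := (LinearMap.ker f).subtype.baseChange S)
      (g := f.baseChange S)
      (Module.Flat.lTensor_preserves_injective_linearMap _ (LinearMap.ker f).injective_subtype)
      (LinearMap.lTensor_surjective S hf)
      (Module.Flat.lTensor_exact S (LinearMap.exact_subtype_ker_map f))
      (ih hK) (hSP.mono (Nat.zero_le _))

end projDimLE

namespace Polynomial

variable {R : Type*} [CommRing R] {M : Type*} [AddCommGroup M] [Module R M]

variable (R M) in
noncomputable def tensorCoeffEquiv : R[X] ⊗[R] M ≃ₗ[R] (ℕ →₀ M) :=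
  (TensorProduct.congr (basisMonomials R).repr (.refl R M)).trans (finsuppScalarLeft R M ℕ)

@[simp]
theorem tensorCoeffEquiv_tmul (p : R[X]) (m : M) (k : ℕ) :
    tensorCoeffEquiv R M (p ⊗ₜ m) k = p.coeff k • m := by
  simp only [tensorCoeffEquiv, LinearEquiv.trans_apply, congr_tmul, LinearEquiv.refl_apply,
    finsuppScalarLeft_apply_tmul_apply]
  rfl

variable [Module R[X] M] [IsScalarTower R R[X] M]

variable (R M) in
noncomputable def tensorCharMap : R[X] ⊗[R] M →ₗ[R[X]] R[X] ⊗[R] M :=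
  (X : R[X]) • LinearMap.id - (DistribSMul.toLinearMap R M (X : R[X])).baseChange R[X]

@[simp]
theorem tensorCharMap_tmul (p : R[X]) (m : M) :
    tensorCharMap R M (p ⊗ₜ m) = (X * p) ⊗ₜ m - p ⊗ₜ ((X : R[X]) • m) := by
  simp [tensorCharMap, smul_tmul']

theorem liftBaseChange_id_comp_tensorCharMap :
    (LinearMap.id : M →ₗ[R] M).liftBaseChange R[X] ∘ₗ tensorCharMap R M = 0 := by
  ext m
  simp

theorem tmul_sub_one_tmul_smul_mem_range (p : R[X]) (m : M) :
    p ⊗ₜ m - 1 ⊗ₜ (p • m) ∈ LinearMap.range (tensorCharMap R M) := by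
  induction p using Polynomial.induction_on generalizing m with
  | C a =>
    have : C a ⊗ₜ[R] m = 1 ⊗ₜ (C a • m) := by
      rw [← algebraMap_eq, algebraMap_smul, Algebra.algebraMap_eq_smul_one, smul_tmul]
    simp [this]
  | add p q hp hq =>
    simpa [add_tmul, add_smul, tmul_add, add_sub_add_comm] using add_mem (hp m) (hq m)
  | monomial n a ih =>
    rw [show C a * X ^ (n + 1) = X * (C a * X ^ n) by ring]
    generalize C a * X ^ n = q at ih ⊢
    obtain ⟨y, hy⟩ := ih ((X : R[X]) • m)
    -- `(X * q) ⊗ m ≡ q ⊗ (X • m)` modulo the range; the induction hypothesis does the rest.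
    refine ⟨y + q ⊗ₜ m, ?_⟩
    rw [map_add, hy, tensorCharMap_tmul, mul_comm X q, mul_smul]
    abel

theorem sub_one_tmul_liftBaseChange_mem_range (x : R[X] ⊗[R] M) :
    x - 1 ⊗ₜ (LinearMap.id.liftBaseChange R[X] x) ∈ LinearMap.range (tensorCharMap R M) := by
  induction x using TensorProduct.induction_on with
  | zero => simp
  | add x y hx hy => simpa [add_sub_add_comm, tmul_add] using add_mem hx hy
  | tmul p m => simpa using tmul_sub_one_tmul_smul_mem_range p m

theorem exact_tensorCharMap :
    Function.Exact (tensorCharMap R M) (LinearMap.id.liftBaseChange R[X]) := by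
  intro x
  constructor
  · intro hx
    simpa [hx] using sub_one_tmul_liftBaseChange_mem_range x
  · rintro ⟨y, rfl⟩
    exact LinearMap.congr_fun liftBaseChange_id_comp_tensorCharMap y

theorem tensorCoeffEquiv_tensorCharMap_succ (x : R[X] ⊗[R] M) (k : ℕ) :
    tensorCoeffEquiv R M (tensorCharMap R M x) (k + 1) =
      tensorCoeffEquiv R M x k - (X : R[X]) • tensorCoeffEquiv R M x (k + 1) := by
  induction x using TensorProduct.induction_on with
  | zero => simp
  | add x y hx hy => simp only [map_add, Finsupp.add_apply, hx, hy, smul_add]; abel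
  | tmul p m => simp [smul_comm (X : R[X])]

-- The top coefficient of a nonzero `x` reappears one degree higher in `tensorCharMap R M x`.
theorem tensorCharMap_injective : Function.Injective (tensorCharMap R M) := by
  rw [injective_iff_map_eq_zero]
  intro x hx
  by_contra hne
  set c := tensorCoeffEquiv R M x
  have hc : c ≠ 0 := by simpa [c] using hne
  set N := c.support.max' (Finsupp.support_nonempty_iff.mpr hc)
  have hN : c N ≠ 0 := Finsupp.mem_support_iff.mp (Finset.max'_mem _ _)
  have hN1 : c (N + 1) = 0 :=
    Finsupp.notMem_support_iff.mp fun h => by have := c.support.le_max' _ h; omega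
  have hcoeff :
      tensorCoeffEquiv R M (tensorCharMap R M x) (N + 1) = c N - (X : R[X]) • c (N + 1) :=
    tensorCoeffEquiv_tensorCharMap_succ x N
  simp only [hx, hN1, map_zero, Finsupp.coe_zero, Pi.zero_apply, smul_zero, sub_zero] at hcoeff
  exact hN hcoeff.symm

end Polynomial

/-- Hilbert syzygy type estimate: the global dimension of `R[T]` is at most the
global dimension of `R` plus one. -/
theorem globalDim_polynomial_le (R : Type) [CommRing R] (d : ℕ)
    (hR : globalDimLE R d) : globalDimLE (Polynomial R) (d + 1) := by
  intro M _ _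
  let : Module R M := Module.compHom M (algebraMap R R[X])
  have : IsScalarTower R R[X] M := IsScalarTower.of_compHom R R[X] M
  have hA : projDimLE R[X] d (R[X] ⊗[R] M) := (hR M).baseChange R[X]
  exact projDimLE_succ_of_exact tensorCharMap_injective (fun m => ⟨1 ⊗ₜ m, by simp⟩)
    exact_tensorCharMap hA (hA.mono d.le_succ)
end

section
/- Let (ξ_i)_{i∈ℕ} be variables, let L_j ∈ ⊕_{i} ℂξ_i (j = 1, 2, ...) be linear forms each involving only finitely many variables, and let b ∈ ∏_j ℂ. Then the infinite system of linear equations L_j(ξ) = b_j for all j has a solution ξ ∈ ∏_i ℂ if and only if for every finite subset F ⊆ ℕ and scalars c_j ∈ ℂ (j ∈ F) with Σ_{j∈F} c_j L_j = 0, one has Σ_{j∈F} c_j b_j = 0. -/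
/-- Solvability of an infinite system of linear equations (Hörmander): the
system `L_j(ξ) = b_j` (each `L_j` a finite linear combination of the variables
`ξ_i`) has a solution `ξ` if and only if for every finite set `F` of indices and
scalars `c_j` with `Σ_{j∈F} c_j L_j = 0`, one has `Σ_{j∈F} c_j b_j = 0`. -/
theorem infinite_linear_system_solvable (L : ℕ → (ℕ →₀ ℂ)) (b : ℕ → ℂ) :
    (∃ ξ : ℕ → ℂ, ∀ j, ((L j).sum fun i a => a * ξ i) = b j) ↔
      (∀ (F : Finset ℕ) (c : ℕ → ℂ),
        (∑ j ∈ F, c j • L j) = 0 → (∑ j ∈ F, c j * b j) = 0) := by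
  constructor
  · rintro ⟨ξ, hξ⟩ F c hc
    have : ((∑ j ∈ F, c j • L j).sum fun i a => a * ξ i) = ∑ j ∈ F, c j * b j := by
      rw [show (fun i a => a * ξ i) = fun i a => a • ξ i from rfl]
      rw [← Finsupp.linearCombination_apply ℂ (v := ξ)]
      rw [map_sum]
      refine Finset.sum_congr rfl fun j _ => ?_
      rw [map_smul, Finsupp.linearCombination_apply ℂ (v := ξ)]
      rw [show ((L j).sum fun i a => a • ξ i) = (L j).sum fun i a => a * ξ i from rfl,
        hξ j, smul_eq_mul]
    rw [hc] at this
    simpa using this.symm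
  · intro h
    set T : (ℕ →₀ ℂ) →ₗ[ℂ] (ℕ →₀ ℂ) := Finsupp.linearCombination ℂ L
    set B : (ℕ →₀ ℂ) →ₗ[ℂ] ℂ := Finsupp.linearCombination ℂ b
    have hker : LinearMap.ker T ≤ LinearMap.ker B := by
      intro c hc
      rw [LinearMap.mem_ker] at hc ⊢
      have h1 : (∑ j ∈ c.support, c j • L j) = 0 := by
        rw [← hc]; rfl
      have := h c.support c h1
      rw [show B c = ∑ j ∈ c.support, c j * b j from rfl]
      exact this
    -- B descends through range of T
    let Bq : ((ℕ →₀ ℂ) ⧸ LinearMap.ker T) →ₗ[ℂ] ℂ := Submodule.liftQ _ B hker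
    let e := LinearMap.quotKerEquivRange T
    let g : LinearMap.range T →ₗ[ℂ] ℂ := Bq.comp (e.symm : LinearMap.range T →ₗ[ℂ] _)
    obtain ⟨f, hf⟩ := LinearMap.exists_extend g
    have hfT : ∀ c : ℕ →₀ ℂ, f (T c) = B c := by
      intro c
      have h1 : (⟨T c, LinearMap.mem_range_self T c⟩ : LinearMap.range T) =
          e (Submodule.Quotient.mk c) := rfl
      have : f (T c) = g ⟨T c, LinearMap.mem_range_self T c⟩ := by
        rw [← hf]; rfl
      rw [this, h1]
      show Bq (e.symm (e (Submodule.Quotient.mk c))) = B c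
      rw [LinearEquiv.symm_apply_apply]
      rfl
    refine ⟨fun i => f (Finsupp.single i 1), fun j => ?_⟩
    have hLj : L j = T (Finsupp.single j 1) := by
      simp [T, Finsupp.linearCombination_single]
    have hx : ∀ x : ℕ →₀ ℂ, f x = x.sum fun i a => a * f (Finsupp.single i 1) := by
      intro x
      conv_lhs => rw [← Finsupp.sum_single x]
      rw [map_finsuppSum]
      refine Finsupp.sum_congr fun i _ => ?_
      rw [show Finsupp.single i (x i) = x i • Finsupp.single i 1 from by
        simp [Finsupp.smul_single], map_smul, smul_eq_mul]
    rw [← hx, hLj, hfT]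
    simp [B, Finsupp.linearCombination_single]
end
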